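/- Let G be the GTS with states {s, q}, initial state s, labelling L(s) = {a}, L(q) = {¬a}, may transitions s → s, s → q, and the single must hypertransition s R⁺ {s, q}. Then every state ⟨K, s_K⟩ of a Kripke Structure K with ⟨K, s_K⟩ ≤_mix ⟨G, s⟩ satisfies: every state reachable from s_K either is labelled with a and has an outgoing transition, or is labelled with ¬a and has no outgoing transition. -/
import Mathlib


set_option autoImplicit true
set_option maxHeartbeats 800000

structure GTS (σ : Type) (α : Type) where
  init : Set σ
  may : σ → σ → Prop
  must : σ → Set σ → Prop
  labT : σ → α → Prop
  labF : σ → α → Prop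
  must_may : ∀ s A, must s A → ∀ t ∈ A, may s t
  lab_con : ∀ s p, ¬ (labT s p ∧ labF s p)

/-- `H` is a mixed simulation from `M₁` to `M₂`. -/
def IsMixedSim (M₁ : GTS σ₁ α) (M₂ : GTS σ₂ α) (H : σ₁ → σ₂ → Prop) : Prop :=
  ∀ s₁ s₂, H s₁ s₂ →
    ((∀ p, M₂.labT s₂ p → M₁.labT s₁ p) ∧ (∀ p, M₂.labF s₂ p → M₁.labF s₁ p)) ∧
    (∀ s₁', M₁.may s₁ s₁' → ∃ s₂', M₂.may s₂ s₂' ∧ H s₁' s₂') ∧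
    (∀ A₂, M₂.must s₂ A₂ → ∃ A₁, M₁.must s₁ A₁ ∧ ∀ s₁' ∈ A₁, ∃ s₂' ∈ A₂, H s₁' s₂')

/-- `⟨M₁,s₁⟩ ≤_mix ⟨M₂,s₂⟩`. -/
def MixLe (M₁ : GTS σ₁ α) (s₁ : σ₁) (M₂ : GTS σ₂ α) (s₂ : σ₂) : Prop :=
  ∃ H, IsMixedSim M₁ M₂ H ∧ H s₁ s₂

/-- A Kripke Structure viewed as a GTS: complete labelling, and must
hypertransitions are exactly the singleton may transitions. -/
def IsKS (M : GTS σ α) : Prop :=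
  (∀ s p, M.labT s p ∨ M.labF s p) ∧
  (∀ s A, M.must s A ↔ ∃ t, A = {t} ∧ M.may s t)

/-- A KMTS is a GTS whose must hypertransitions all have singleton targets. -/
def IsKMTS (M : GTS σ α) : Prop :=
  ∀ s A, M.must s A → ∃ t, A = ({t} : Set σ)

/-- States of the GTS `G`. -/
inductive GS | s | q
deriving DecidableEq

/-- The GTS `G`: `L(s) = {a}`, `L(q) = {¬a}`, may transitions `s → s`, `s → q`,
and must hypertransition `s R⁺ {s, q}`.  The atomic proposition `a` is `()`. -/
def G : GTS GS Unit where
  init := {GS.s}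
  may x _ := x = GS.s
  must x A := x = GS.s ∧ A = Set.univ
  labT x _ := x = GS.s
  labF x _ := x = GS.q
  must_may := by rintro x A ⟨rfl, rfl⟩ t _; rfl
  lab_con := by rintro x p ⟨h1, h2⟩; subst h1; exact GS.noConfusion h2

/-- Every Kripke-Structure concretisation of `⟨G,s⟩` satisfies: every reachable
state either is labelled `a` and has an outgoing transition, or is labelled `¬a`
and is deadlocked. -/
theorem reach_invariant (τ : Type) (K : GTS τ Unit) (hK : IsKS K) (sK : τ)
    (h : MixLe K sK G GS.s) :
    ∀ t, Relation.ReflTransGen K.may sK t →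
      (K.labT t () ∧ ∃ u, K.may t u) ∨ (K.labF t () ∧ ∀ u, ¬ K.may t u) := by
  obtain ⟨H, hsim, hH⟩ := h
  -- invariant: every reachable state is related to s or q
  have inv : ∀ t, Relation.ReflTransGen K.may sK t → H t GS.s ∨ H t GS.q := by
    intro t ht
    induction ht with
    | refl => exact Or.inl hH
    | tail hab hbc ih =>
      rename_i b c
      rcases ih with hb | hb
      · obtain ⟨s₂', hmay, hrel⟩ := (hsim _ _ hb).2.1 c hbc
        cases s₂' with
        | s => exact Or.inl hrel
        | q => exact Or.inr hrel
      · obtain ⟨s₂', hmay, _⟩ := (hsim _ _ hb).2.1 c hbc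
        exact absurd hmay (by simp [G])
  intro t ht
  rcases inv t ht with hb | hb
  · left
    constructor
    · exact (hsim _ _ hb).1.1 () rfl
    · obtain ⟨A₁, hmust, _⟩ := (hsim _ _ hb).2.2 Set.univ ⟨rfl, rfl⟩
      obtain ⟨u, rfl, hu⟩ := (hK.2 t A₁).mp hmust
      exact ⟨u, hu⟩
  · right
    constructor
    · exact (hsim _ _ hb).1.2 () rfl
    · intro u hu
      obtain ⟨s₂', hmay, _⟩ := (hsim _ _ hb).2.1 u hu
      exact absurd hmay (by simp [G])
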